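/- arXiv:0906.1126 — 2 statements merged into one kernel-verified Lean document; each statement's English description precedes it below -/
import Mathlib

section
/- For every integer n ≥ 6, the chromatic number of the square of T_{6,n} = C_6 □ C_n equals 6. -/
open SimpleGraph

/-- The square of a simple graph `G`: distinct vertices are adjacent iff they are
adjacent in `G` or have a common neighbor in `G` (i.e. are at distance at most 2). -/
def SimpleGraph.square {V : Type*} (G : SimpleGraph V) : SimpleGraph V where
  Adj u v := u ≠ v ∧ (G.Adj u v ∨ ∃ w, G.Adj u w ∧ G.Adj w v)
  symm := ⟨fun u v => by
    rintro ⟨h, h' | ⟨w, hw1, hw2⟩⟩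
    exacts [⟨h.symm, Or.inl h'.symm⟩, ⟨h.symm, Or.inr ⟨w, hw2.symm, hw1.symm⟩⟩]⟩
  loopless := ⟨fun v => by simp⟩

/-- The toroidal grid `T_{m,n} = C_m □ C_n`. -/
def toroidalGrid (m n : ℕ) : SimpleGraph (Fin m × Fin n) :=
  SimpleGraph.cycleGraph m □ SimpleGraph.cycleGraph n

/-- The independence number of a graph: the maximum size of an independent set,
i.e. the clique number of the complement graph. -/
noncomputable def SimpleGraph.indepNum' {V : Type*} (G : SimpleGraph V) : ℕ :=
  Gᶜ.cliqueNum

/-! Colour vertex `(i, j)` of `C₆ □ Cₙ` by `i + s j ∈ ℤ/6`. This is a proper colouring of the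
square as soon as consecutive column shifts `s j`, `s (j + 1)` differ by 2, 3 or 4 and shifts two
columns apart are distinct; such shifts exist for every `n ≥ 6`: mostly steps of 2, with a few
steps of 3 and 4 at the start to correct the residue of `n` modulo 3.

Conversely, in the square two vertices of one column are adjacent unless they are antipodal, so an
independent set meets a column in at most two vertices, and when it meets a column twice it misses
both neighbouring columns. Hence it meets any two consecutive columns in at most two vertices,
so it has at most `n` vertices, and the `6n` vertices need six colours. -/

open Finset

variable {α β : Type*}

namespace SimpleGraph

lemma square_adj {G : SimpleGraph α} {u v : α} :
    G.square.Adj u v ↔ u ≠ v ∧ (G.Adj u v ∨ ∃ w, G.Adj u w ∧ G.Adj w v) := Iff.rfl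

instance [Fintype α] [DecidableEq α] (G : SimpleGraph α) [DecidableRel G.Adj] :
    DecidableRel G.square.Adj :=
  fun _ _ => decidable_of_iff' _ square_adj

lemma Adj.square {G : SimpleGraph α} {u v : α} (h : G.Adj u v) : G.square.Adj u v :=
  ⟨h.ne, Or.inl h⟩

lemma square_boxProd_adj {G : SimpleGraph α} {H : SimpleGraph β} {x y : α × β} :
    (G □ H).square.Adj x y ↔
      G.square.Adj x.1 y.1 ∧ x.2 = y.2 ∨ H.square.Adj x.2 y.2 ∧ x.1 = y.1 ∨
        G.Adj x.1 y.1 ∧ H.Adj x.2 y.2 := by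
  obtain ⟨a, b⟩ := x
  obtain ⟨a', b'⟩ := y
  simp only [square_adj, boxProd_adj, Prod.exists, ne_eq, Prod.mk.injEq]
  constructor
  · rintro ⟨hne, (⟨h, rfl⟩ | ⟨h, rfl⟩) | ⟨c, d, (⟨h₁, rfl⟩ | ⟨h₁, rfl⟩), (⟨h₂, rfl⟩ | ⟨h₂, rfl⟩)⟩⟩
    all_goals grind [Adj.ne]
  · rintro (⟨⟨hne, h | ⟨c, h₁, h₂⟩⟩, rfl⟩ | ⟨⟨hne, h | ⟨c, h₁, h₂⟩⟩, rfl⟩ | ⟨h₁, h₂⟩)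
    case inr.inr => exact ⟨by grind [Adj.ne], Or.inr ⟨a', b, Or.inl ⟨h₁, rfl⟩, Or.inr ⟨h₂, rfl⟩⟩⟩
    all_goals grind

theorem card_le_mul_of_colorable [Fintype α] {G : SimpleGraph α} {k a : ℕ} (hG : G.Colorable k)
    (hindep : ∀ s : Finset α, G.IsIndepSet ↑s → #s ≤ a) : Fintype.card α ≤ k * a := by
  classical
  obtain ⟨C⟩ := hG
  calc Fintype.card α = ∑ c : Fin k, #{v | C v = c} := card_eq_sum_card_fiberwise (by simp)
    _ ≤ ∑ _c : Fin k, a := sum_le_sum fun c _ =>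
      hindep _ (by simpa [Coloring.colorClass] using C.isIndepSet_colorClass c)
    _ = k * a := by simp

end SimpleGraph

lemma cycleGraph_six_square_adj {i i' : Fin 6} :
    (cycleGraph 6).square.Adj i i' ↔ i ≠ i' ∧ i' ≠ i + 3 := by
  revert i i'; decide

lemma cycleGraph_square_adj {n : ℕ} {j j' : Fin (n + 2)}
    (h : (cycleGraph (n + 2)).square.Adj j j') :
    j' = j + 1 ∨ j = j' + 1 ∨ j' = j + 1 + 1 ∨ j = j' + 1 + 1 := by
  simp only [square_adj, cycleGraph_adj, sub_eq_iff_eq_add'] at h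
  grind

lemma Fin.natCast_val_ne_of_ne {m : ℕ} {i i' : Fin m} (h : i ≠ i') :
    ((i : ℕ) : ZMod m) ≠ (i' : ℕ) := by
  rw [Ne, ZMod.natCast_eq_natCast_iff', Nat.mod_eq_of_lt i.isLt, Nat.mod_eq_of_lt i'.isLt]
  exact Fin.val_ne_of_ne h

lemma cycleGraph_six_natCast_val_sub_notMem {i i' : Fin 6} (h : i = i' ∨ (cycleGraph 6).Adj i i') :
    ((i : ℕ) : ZMod 6) - (i' : ℕ) ∉ ({2, 3, 4} : Finset (ZMod 6)) := by
  revert i i'; decide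

theorem toroidalGrid_six_square_colorable_of_shift {n : ℕ} (s : Fin (n + 2) → ZMod 6)
    (hs₁ : ∀ j, s (j + 1) - s j ∈ ({2, 3, 4} : Finset (ZMod 6)))
    (hs₂ : ∀ j, s (j + 1 + 1) ≠ s j) :
    (toroidalGrid 6 (n + 2)).square.Colorable 6 := by
  have step {i i' : Fin 6} {j : Fin (n + 2)} (h : i = i' ∨ (cycleGraph 6).Adj i i') :
      ((i : ℕ) : ZMod 6) + s j ≠ (i' : ℕ) + s (j + 1) := fun heq => by
    refine cycleGraph_six_natCast_val_sub_notMem h ?_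
    rw [show ((i : ℕ) : ZMod 6) - (i' : ℕ) = s (j + 1) - s j by linear_combination heq]
    exact hs₁ j
  refine (Coloring.mk (fun p => ((p.1 : ℕ) : ZMod 6) + s p.2) ?_).colorable.mono (by simp)
  rintro ⟨i, j⟩ ⟨i', j'⟩ hadj
  replace hadj := square_boxProd_adj.mp hadj
  dsimp only at hadj ⊢
  rcases hadj with ⟨hrow, rfl⟩ | ⟨hcol, rfl⟩ | ⟨hrow, hcol⟩
  · exact fun heq =>
      Fin.natCast_val_ne_of_ne (cycleGraph_six_square_adj.mp hrow).1 (add_right_cancel heq)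
  · rcases cycleGraph_square_adj hcol with rfl | rfl | rfl | rfl
    · exact step (Or.inl rfl)
    · exact (step (Or.inl rfl)).symm
    · exact fun heq => hs₂ j (add_left_cancel heq).symm
    · exact fun heq => hs₂ j' (add_left_cancel heq)
  · rcases (cycleGraph_adj.mp hcol).imp sub_eq_iff_eq_add'.mp sub_eq_iff_eq_add'.mp with rfl | rfl
    · exact (step (Or.inr hrow.symm)).symm
    · exact step (Or.inr hrow)

/-- With column shifts `2 a + shiftCorrection (N % 3) a`, consecutive shifts differ by
`3, 4, 3, 2, …, 2` if `N ≡ 1` and by `3, 2, 3, 2, …, 2` if `N ≡ 2 (mod 3)`, so the total step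
`2N + 4`, resp. `2N + 2`, around the cycle is divisible by 6. -/
def shiftCorrection (r a : ℕ) : ℕ :=
  if r = 1 then (if a = 0 then 0 else if a = 1 then 1 else if a = 2 then 3 else 4)
  else if r = 2 then (if a = 0 then 0 else if a ≤ 2 then 1 else 2)
  else 0

def columnShift (N a : ℕ) : ℕ := 2 * a + shiftCorrection (N % 3) a

lemma columnShift_add_one_mod_six {N a : ℕ} (hN : 6 ≤ N) (ha : a < N) :
    columnShift N ((a + 1) % N) % 6 = (columnShift N a + 2) % 6 ∨
      columnShift N ((a + 1) % N) % 6 = (columnShift N a + 3) % 6 ∨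
      columnShift N ((a + 1) % N) % 6 = (columnShift N a + 4) % 6 := by
  obtain h | h : a + 1 < N ∨ a + 1 = N := by omega
  · rw [Nat.mod_eq_of_lt h]
    unfold columnShift shiftCorrection
    split_ifs <;> (try contradiction) <;> omega
  · rw [h, Nat.mod_self]
    unfold columnShift shiftCorrection
    split_ifs <;> (try contradiction) <;> omega

lemma columnShift_add_two_mod_six_ne {N a : ℕ} (hN : 6 ≤ N) (ha : a < N) :
    columnShift N ((a + 2) % N) % 6 ≠ columnShift N a % 6 := by
  obtain h | h | h : a + 2 < N ∨ a + 2 = N ∨ a + 2 = N + 1 := by omega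
  · rw [Nat.mod_eq_of_lt h]
    unfold columnShift shiftCorrection
    split_ifs <;> (try contradiction) <;> omega
  · rw [h, Nat.mod_self]
    unfold columnShift shiftCorrection
    split_ifs <;> (try contradiction) <;> omega
  · rw [h, Nat.add_mod_left, Nat.mod_eq_of_lt (show 1 < N by omega)]
    unfold columnShift shiftCorrection
    split_ifs <;> (try contradiction) <;> omega

lemma natCast_sub_natCast_eq_of_mod_eq {c a b d : ℕ} (h : a % c = (b + d) % c) :
    (a : ZMod c) - b = d := by
  rw [sub_eq_iff_eq_add', ← Nat.cast_add, ZMod.natCast_eq_natCast_iff']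
  exact h

lemma columnShift_add_one_sub_mem {n : ℕ} (hn : 6 ≤ n + 2) (j : Fin (n + 2)) :
    ((columnShift (n + 2) ↑(j + 1) : ℕ) : ZMod 6) - (columnShift (n + 2) j : ℕ) ∈
      ({2, 3, 4} : Finset (ZMod 6)) := by
  rw [Fin.val_add, Fin.val_one]
  rcases columnShift_add_one_mod_six hn j.isLt with h | h | h <;>
    rw [natCast_sub_natCast_eq_of_mod_eq h] <;> decide

lemma columnShift_add_one_add_one_ne {n : ℕ} (hn : 6 ≤ n + 2) (j : Fin (n + 2)) :
    ((columnShift (n + 2) ↑(j + 1 + 1) : ℕ) : ZMod 6) ≠ (columnShift (n + 2) j : ℕ) := by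
  rw [Fin.val_add, Fin.val_add, Fin.val_one, Nat.mod_add_mod, Ne,
    ZMod.natCast_eq_natCast_iff' _ _ 6]
  exact columnShift_add_two_mod_six_ne hn j.isLt

def column [DecidableEq β] (S : Finset (α × β)) (j : β) : Finset (α × β) := {p ∈ S | p.2 = j}

lemma mk_mem_column [DecidableEq β] {S : Finset (α × β)} {a : α} {j j' : β} :
    (a, j') ∈ column S j ↔ (a, j') ∈ S ∧ j = j' := by
  simp [column, eq_comm]

section IndepSet

variable {n : ℕ} {S : Finset (Fin 6 × Fin (n + 2))}

lemma eq_add_three_of_mem_of_mem (hS : (toroidalGrid 6 (n + 2)).square.IsIndepSet ↑S)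
    {i i' : Fin 6} {j : Fin (n + 2)} (hi : (i, j) ∈ S) (hi' : (i', j) ∈ S) (hne : i ≠ i') :
    i' = i + 3 := by
  by_contra h
  exact hS hi hi' (by simpa using hne)
    (square_boxProd_adj.mpr (Or.inl ⟨cycleGraph_six_square_adj.mpr ⟨hne, h⟩, rfl⟩))

lemma notMem_of_mem_of_adj (hS : (toroidalGrid 6 (n + 2)).square.IsIndepSet ↑S)
    {i r : Fin 6} {j j' : Fin (n + 2)} (hi : (i, j) ∈ S) (hj : (cycleGraph (n + 2)).Adj j j')
    (hr : i = r ∨ (cycleGraph 6).Adj i r) : (r, j') ∉ S := by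
  intro hr'
  refine hS hi hr' (fun h => hj.ne (congrArg Prod.snd h)) (square_boxProd_adj.mpr ?_)
  rcases hr with rfl | hr
  · exact Or.inr (Or.inl ⟨hj.square, rfl⟩)
  · exact Or.inr (Or.inr ⟨hr, hj⟩)

lemma card_column_le_two (hS : (toroidalGrid 6 (n + 2)).square.IsIndepSet ↑S) (j : Fin (n + 2)) :
    #(column S j) ≤ 2 := by
  obtain h | ⟨⟨i, _⟩, hp⟩ := (column S j).eq_empty_or_nonempty
  · simp [h]
  obtain ⟨hi, rfl⟩ := mk_mem_column.mp hp
  calc #(column S j) ≤ #{(i, j), (i + 3, j)} := card_le_card fun ⟨i', _⟩ hq => by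
        obtain ⟨hi', rfl⟩ := mk_mem_column.mp hq
        by_cases h : i = i'
        · simp [h]
        · simp [eq_add_three_of_mem_of_mem hS hi hi' h]
    _ ≤ 2 := card_le_two

lemma column_eq_empty_of_adj (hS : (toroidalGrid 6 (n + 2)).square.IsIndepSet ↑S)
    {j j' : Fin (n + 2)} (hj : (cycleGraph (n + 2)).Adj j j') (h : 2 ≤ #(column S j)) :
    column S j' = ∅ := by
  obtain ⟨⟨i, _⟩, hp, ⟨i', _⟩, hq, hne⟩ := one_lt_card.mp h
  obtain ⟨hi, rfl⟩ := mk_mem_column.mp hp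
  obtain ⟨hi', rfl⟩ := mk_mem_column.mp hq
  have hi' : (i + 3, j) ∈ S := eq_add_three_of_mem_of_mem hS hi hi' (by simpa using hne) ▸ hi'
  refine eq_empty_of_forall_notMem fun ⟨r, _⟩ hr => ?_
  obtain ⟨hr, rfl⟩ := mk_mem_column.mp hr
  have cover : ∀ i r : Fin 6,
      (i = r ∨ (cycleGraph 6).Adj i r) ∨ (i + 3 = r ∨ (cycleGraph 6).Adj (i + 3) r) := by
    decide
  rcases cover i r with h | h
  · exact notMem_of_mem_of_adj hS hi hj h hr
  · exact notMem_of_mem_of_adj hS hi' hj h hr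

lemma card_column_add_card_column_add_one_le_two
    (hS : (toroidalGrid 6 (n + 2)).square.IsIndepSet ↑S) (j : Fin (n + 2)) :
    #(column S j) + #(column S (j + 1)) ≤ 2 := by
  have hj : (cycleGraph (n + 2)).Adj j (j + 1) :=
    cycleGraph_adj.mpr (Or.inr (add_sub_cancel_left j 1))
  have h₁ := card_column_le_two hS j
  have h₂ := card_column_le_two hS (j + 1)
  have h₃ := fun h => card_eq_zero.mpr (column_eq_empty_of_adj hS hj h)
  have h₄ := fun h => card_eq_zero.mpr (column_eq_empty_of_adj hS hj.symm h)
  omega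

lemma card_le_of_isIndepSet (hS : (toroidalGrid 6 (n + 2)).square.IsIndepSet ↑S) :
    #S ≤ n + 2 := by
  have hS' : #S = ∑ j, #(column S j) := card_eq_sum_card_fiberwise (by simp)
  have hshift : ∑ j, #(column S (j + 1)) = ∑ j, #(column S j) :=
    Equiv.sum_comp (Equiv.addRight 1) fun j => #(column S j)
  have := calc
    2 * #S = ∑ j, (#(column S j) + #(column S (j + 1))) := by
      rw [sum_add_distrib, hshift, ← hS', two_mul]
    _ ≤ ∑ _j : Fin (n + 2), 2 :=
      sum_le_sum fun j _ => card_column_add_card_column_add_one_le_two hS j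
    _ = 2 * (n + 2) := by simp [mul_comm]
  omega

end IndepSet

lemma toroidalGrid_six_square_not_colorable_five (n : ℕ) :
    ¬(toroidalGrid 6 (n + 2)).square.Colorable 5 := fun h => by
  have := card_le_mul_of_colorable h fun _ => card_le_of_isIndepSet
  rw [Fintype.card_prod, Fintype.card_fin, Fintype.card_fin] at this
  omega

theorem stmt8 (n : ℕ) (hn : 6 ≤ n) :
    (toroidalGrid 6 n).square.chromaticNumber = 6 := by
  obtain ⟨m, rfl⟩ : ∃ m, n = m + 2 := ⟨n - 2, by omega⟩
  rw [show (6 : ℕ∞) = (5 : ℕ) + 1 from rfl, chromaticNumber_eq_iff_colorable_not_colorable]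
  exact ⟨toroidalGrid_six_square_colorable_of_shift (fun j => (columnShift (m + 2) j : ZMod 6))
    (columnShift_add_one_sub_mem hn) (columnShift_add_one_add_one_ne hn),
    toroidalGrid_six_square_not_colorable_five m⟩
end

section
/- For every integer n ≥ 5, the independence number of the square of T_{5,n} = C_5 □ C_n satisfies α(T_{5,n}²) ≤ n; moreover, if n is not a multiple of 5 then α(T_{5,n}²) < n. -/
open SimpleGraph

/-!
An independent set of `(C₅ □ Cₙ)²` meets every column in at most one vertex, because `C₅²` is
complete; hence it has at most `n` vertices. If it has exactly `n`, it is the graph of a row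
function `r : ℤ/n → ℤ/5`. Consecutive columns force `r (j + 1) - r j ∈ {2, 3}` (rows must be
non-adjacent in `C₅`), and columns at distance two force `r (j + 2) ≠ r j`, so the difference
`d` is the same for all `j`. Summing around the cycle gives `n • d = 0` in `ℤ/5` with `d ≠ 0`,
hence `5 ∣ n`.
-/

open Finset Fin.CommRing

theorem Finset.exists_mk_mem_of_injOn_snd {V W : Type*} [Fintype W] {s : Finset (V × W)}
    (hinj : Set.InjOn Prod.snd (s : Set (V × W))) (hcard : #s = Fintype.card W) (j : W) :
    ∃ a, (a, j) ∈ s := by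
  classical
  have himage : s.image Prod.snd = univ :=
    eq_univ_of_card _ ((card_image_of_injOn hinj).trans hcard)
  obtain ⟨⟨a, k⟩, hmem, rfl⟩ := mem_image.1 (himage ▸ mem_univ j)
  exact ⟨a, hmem⟩

theorem Fin.apply_eq_apply_zero_of_apply_add_one {n : ℕ} {α : Type*} {f : Fin (n + 1) → α}
    (hf : ∀ j, f (j + 1) = f j) (j : Fin (n + 1)) : f j = f 0 := by
  induction j using Fin.induction with
  | zero => rfl
  | succ j ih => rw [← Fin.coeSucc_eq_succ, hf, ih]

theorem Fin.add_one_add_one_ne_self {n : ℕ} (j : Fin (n + 3)) : j + 1 + 1 ≠ j := by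
  intro h
  have hval := congrArg Fin.val (add_eq_left.1 ((add_assoc j 1 1).symm.trans h))
  simp only [Fin.val_add, Fin.val_one, Fin.val_zero] at hval
  rw [Nat.mod_eq_of_lt (by omega)] at hval
  omega

theorem Fin.five_dvd_of_nsmul_eq_zero {d : Fin 5} (hd : d ≠ 0) {k : ℕ} (hk : k • d = 0) :
    5 ∣ k := by
  rw [nsmul_eq_mul] at hk
  have hcancel : ∀ x d : Fin 5, d ≠ 0 → x * d = 0 → x = 0 := by decide
  exact Fin.natCast_eq_zero.1 (hcancel _ d hd hk)

namespace SimpleGraph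

variable {V W : Type*} {G : SimpleGraph V} {H : SimpleGraph W}

theorem square_adj_of_adj {u v : V} (h : G.Adj u v) : G.square.Adj u v :=
  ⟨h.ne, Or.inl h⟩

theorem square_adj_of_adj_of_adj {u w v : V} (huw : G.Adj u w) (hwv : G.Adj w v) (huv : u ≠ v) :
    G.square.Adj u v :=
  ⟨huv, Or.inr ⟨w, huw, hwv⟩⟩

theorem boxProd_square_adj_of_square_adj_left {a b : V} (hab : G.square.Adj a b) (j : W) :
    (G □ H).square.Adj (a, j) (b, j) := by
  obtain ⟨hne, h | ⟨c, hac, hcb⟩⟩ := hab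
  · exact square_adj_of_adj (boxProd_adj_left.2 h)
  · exact square_adj_of_adj_of_adj (boxProd_adj_left.2 hac) (boxProd_adj_left.2 hcb)
      (by simpa using hne)

theorem boxProd_square_adj_of_adj_right {a b : V} {j k : W} (hjk : H.Adj j k)
    (hab : a = b ∨ G.Adj a b) : (G □ H).square.Adj (a, j) (b, k) := by
  obtain rfl | hab := hab
  · exact square_adj_of_adj (boxProd_adj_right.2 hjk)
  · exact square_adj_of_adj_of_adj (boxProd_adj_left.2 hab) (boxProd_adj_right.2 hjk)
      (by simp [hjk.ne])

theorem boxProd_square_adj_of_adj_of_adj_right (a : V) {j k l : W} (hjk : H.Adj j k)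
    (hkl : H.Adj k l) (hjl : j ≠ l) : (G □ H).square.Adj (a, j) (a, l) :=
  square_adj_of_adj_of_adj (boxProd_adj_right.2 hjk) (boxProd_adj_right.2 hkl) (by simpa using hjl)

theorem IsIndepSet.injOn_snd_of_square_eq_top (hG : G.square = ⊤) {s : Set (V × W)}
    (hs : (G □ H).square.IsIndepSet s) : s.InjOn Prod.snd := by
  rintro ⟨a, j⟩ hu ⟨b, k⟩ hv (rfl : j = k)
  by_contra hne
  have hab : a ≠ b := fun h => hne (by rw [h])
  exact hs hu hv hne (boxProd_square_adj_of_square_adj_left (hG ▸ hab) j)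

theorem IsIndepSet.card_le_of_square_eq_top [Fintype W] (hG : G.square = ⊤) {s : Finset (V × W)}
    (hs : (G □ H).square.IsIndepSet s) : #s ≤ Fintype.card W :=
  card_univ (α := W) ▸ card_le_card_of_injOn Prod.snd (fun _ _ => mem_univ _)
    (hs.injOn_snd_of_square_eq_top hG)

end SimpleGraph

theorem cycleGraph_adj_add_one {n : ℕ} (j : Fin (n + 2)) : (cycleGraph (n + 2)).Adj j (j + 1) :=
  cycleGraph_adj.2 (Or.inr (add_sub_cancel_left j 1))

theorem cycleGraph_five_square_eq_top : (cycleGraph 5).square = ⊤ := by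
  ext a b
  simp only [SimpleGraph.square, top_adj]
  revert a b
  decide

theorem cycleGraph_five_sub_eq_sub_of_not_adj : ∀ a b c : Fin 5,
    a ≠ b → ¬(cycleGraph 5).Adj a b → b ≠ c → ¬(cycleGraph 5).Adj b c → a ≠ c →
    c - b = b - a := by
  decide

theorem five_dvd_of_forall_not_square_adj {n : ℕ} (r : Fin (n + 3) → Fin 5)
    (hr : ∀ j k, j ≠ k → ¬(toroidalGrid 5 (n + 3)).square.Adj (r j, j) (r k, k)) :
    5 ∣ n + 3 := by
  have hstep (j : Fin (n + 3)) : r j ≠ r (j + 1) ∧ ¬(cycleGraph 5).Adj (r j) (r (j + 1)) :=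
    not_or.1 fun h => hr j (j + 1) (cycleGraph_adj_add_one j).ne
      (boxProd_square_adj_of_adj_right (cycleGraph_adj_add_one j) h)
  have hjump (j : Fin (n + 3)) : r j ≠ r (j + 1 + 1) := fun h =>
    hr j (j + 1 + 1) (j.add_one_add_one_ne_self.symm) <| h ▸
      boxProd_square_adj_of_adj_of_adj_right (r j) (cycleGraph_adj_add_one j)
        (cycleGraph_adj_add_one (j + 1)) j.add_one_add_one_ne_self.symm
  set d : Fin (n + 3) → Fin 5 := fun j => r (j + 1) - r j with hd
  -- In `C₅` a second non-adjacent step that does not return must repeat the first one.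
  have hd_const : ∀ j, d j = d 0 := Fin.apply_eq_apply_zero_of_apply_add_one fun j =>
    cycleGraph_five_sub_eq_sub_of_not_adj _ _ _ (hstep j).1 (hstep j).2 (hstep (j + 1)).1
      (hstep (j + 1)).2 (hjump j)
  -- The differences telescope around the cycle `C_{n+3}`.
  have hsum : ∑ j, d j = 0 := by
    rw [hd, Finset.sum_sub_distrib, sub_eq_zero]
    exact Equiv.sum_comp (Equiv.addRight 1) r
  have hsum_eq_nsmul : ∑ j, d j = (n + 3) • d 0 := by
    simp [hd_const]
  exact Fin.five_dvd_of_nsmul_eq_zero (sub_ne_zero.2 (hstep 0).1.symm) (hsum_eq_nsmul ▸ hsum)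

theorem stmt15 (n : ℕ) (hn : 5 ≤ n) :
    (toroidalGrid 5 n).square.indepNum' ≤ n ∧
    (n % 5 ≠ 0 → (toroidalGrid 5 n).square.indepNum' < n) := by
  obtain ⟨m, rfl⟩ : ∃ m, n = m + 3 := ⟨n - 3, by omega⟩
  obtain ⟨s, hs, hcard⟩ := (toroidalGrid 5 (m + 3)).square.exists_isNIndepSet_indepNum
  have hle : #s ≤ m + 3 := by
    simpa using hs.card_le_of_square_eq_top cycleGraph_five_square_eq_top
  rw [indepNum', cliqueNum_compl, ← hcard]
  refine ⟨hle, fun h5 => hle.lt_of_ne fun heq => h5 (Nat.mod_eq_zero_of_dvd ?_)⟩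
  choose r hr using Finset.exists_mk_mem_of_injOn_snd
    (hs.injOn_snd_of_square_eq_top cycleGraph_five_square_eq_top) (by simpa using heq)
  exact five_dvd_of_forall_not_square_adj r fun j k hjk => hs (hr j) (hr k) (by simp [hjk])
end
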